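/- arXiv:2004.09046 — 3 statements merged into one kernel-verified Lean document; each statement's English description precedes it below -/
import Mathlib

section
/- The positive integer solutions (a,b) with a ≤ b of the Diophantine equation a^2 - 4ab + b^2 = a + b are exactly the pairs (a(i), a(i+1)) for i ≥ 1, where a(i) is the sequence defined by a(1)=1, a(2)=5, a(i+2) = 4*a(i+1) + 1 - a(i). -/
/-- The sequence `a(i)` with `a(1) = 1`, `a(2) = 5`, and
`a(i+2) = 4*a(i+1) + 1 - a(i)`.  (We set `a(0) = 0`, which is the value forced
by running the recurrence backwards.) -/
def aSeq : ℕ → ℤ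
  | 0 => 0
  | 1 => 1
  | (n + 2) => 4 * aSeq (n + 1) + 1 - aSeq n

lemma aSeq_step (n : ℕ) : aSeq (n + 2) = 4 * aSeq (n + 1) + 1 - aSeq n := rfl

lemma aSeq_eq (i : ℕ) :
    aSeq i ^ 2 - 4 * aSeq i * aSeq (i + 1) + aSeq (i + 1) ^ 2 = aSeq i + aSeq (i + 1) := by
  induction i with
  | zero => norm_num [aSeq]
  | succ n ih =>
      rw [aSeq_step]
      linear_combination ih

lemma aSeq_mono (i : ℕ) : 0 ≤ aSeq i ∧ aSeq i < aSeq (i + 1) := by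
  induction i with
  | zero => norm_num [aSeq]
  | succ n ih =>
      obtain ⟨h0, h1⟩ := ih
      refine ⟨by linarith, ?_⟩
      rw [aSeq_step]
      linarith

lemma forward : ∀ n : ℕ, ∀ a b : ℤ, b.toNat = n → 0 < a → 0 < b → a ≤ b →
    a ^ 2 - 4 * a * b + b ^ 2 = a + b →
    ∃ i : ℕ, 1 ≤ i ∧ a = aSeq i ∧ b = aSeq (i + 1) := by
  intro n
  induction n using Nat.strong_induction_on with
  | _ n ih =>
    intro a b hn ha hb hab heq
    have hlt : a < b := by
      rcases eq_or_lt_of_le hab with h | h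
      · exfalso; nlinarith
      · exact h
    set a' := 4 * a + 1 - b with ha'def
    have heq' : a' ^ 2 - 4 * a' * a + a ^ 2 = a' + a := by
      rw [ha'def]; linear_combination heq
    have hprod : a' * b = a ^ 2 - a := by
      rw [ha'def]; linear_combination -heq
    have ha'nn : 0 ≤ a' := by nlinarith
    have hlt' : a' < a := by nlinarith
    rcases eq_or_lt_of_le ha'nn with h0 | hpos
    · have ha1 : a = 1 := by nlinarith
      have hb5 : b = 5 := by omega
      exact ⟨1, le_refl 1, by norm_num [aSeq, ha1], by norm_num [aSeq, hb5]⟩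
    · obtain ⟨i, hi, hA, hB⟩ := ih a.toNat (by omega) a' a rfl hpos ha hlt'.le heq'
      refine ⟨i + 1, by omega, hB, ?_⟩
      rw [aSeq_step, ← hA, ← hB]
      omega

/-- The positive integer solutions `(a,b)` with `a ≤ b` of
`a² - 4ab + b² = a + b` are exactly the pairs `(a(i), a(i+1))` for `i ≥ 1`. -/
theorem diophantine_solutions (a b : ℤ) :
    (0 < a ∧ 0 < b ∧ a ≤ b ∧ a ^ 2 - 4 * a * b + b ^ 2 = a + b) ↔
      ∃ i : ℕ, 1 ≤ i ∧ a = aSeq i ∧ b = aSeq (i + 1) := by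
  constructor
  · rintro ⟨ha, hb, hab, heq⟩
    exact forward b.toNat a b rfl ha hb hab heq
  · rintro ⟨i, hi, rfl, rfl⟩
    obtain ⟨j, rfl⟩ : ∃ j, i = j + 1 := ⟨i - 1, by omega⟩
    have h1 := aSeq_mono j
    have h2 := aSeq_mono (j + 1)
    exact ⟨by linarith [h1.1, h1.2], by linarith [h2.1, h2.2], h2.2.le, aSeq_eq (j + 1)⟩
end

section
/- For all integers n ≥ 2, with a_i := (∑_p A(n,p)*A(n,p-i)) / (∑_p A(n,p))^2 (so that ∑_i a_i = 1 and a_{-i} = a_i), one has a_0 ≤ 1/2; equivalently, 2*∑_p A(n,p)^2 ≤ (∑_p A(n,p))^2. -/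
/-- The Eulerian number `A(n,q)`: the number of permutations of `{1,...,n}`
with exactly `q` ascents.  (In particular `A(n,q) = 0` unless `0 ≤ q < n`.) -/
def eulerian (n q : ℕ) : ℕ :=
  (Finset.univ.filter fun σ : Equiv.Perm (Fin n) =>
    (Finset.univ.filter fun i : Fin n =>
      ∃ j : Fin n, (j : ℕ) = (i : ℕ) + 1 ∧ σ i < σ j).card = q).card

/-!
Complementing the values of a permutation swaps ascents and descents, so
`A(n, n - 1 - p) = A(n, p)`. Hence `A(n,p) * (A(n,p) + A(n, n-1-p)) ≤ A(n,p) * n!`, and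
summing over `p` gives `2 ∑ A(n,p)² ≤ (n!)²` as soon as no `p` is its own mirror image, i.e.
for even `n`. For `n = 2m + 1` the central term `A(2m+1, m)` has no partner, and the bound
survives because `3 A(2m+1, m) ≤ 2 (2m+1)!`. That inequality comes from the recurrence
`A(N+1, k+1) = (k+2) A(N, k+1) + (N-k) A(N, k)`, obtained by inserting the largest value into a
permutation of `N` letters: it gives `A(2m+1, m) ≤ (m+1) (2m)!`.
-/

open Finset Equiv
open scoped Nat

section SquareSums

variable {ι R : Type*} [CommSemiring R] [PartialOrder R] [IsOrderedRing R]
  {s : Finset ι} {f : ι → R}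

theorem two_mul_sum_sq_le_sq_sum_of_pairing (e : ι → ι) (hf : ∀ p ∈ s, 0 ≤ f p)
    (he : ∀ p ∈ s, e p ∈ s) (hne : ∀ p ∈ s, e p ≠ p) (hfe : ∀ p ∈ s, f (e p) = f p) :
    2 * ∑ p ∈ s, f p ^ 2 ≤ (∑ p ∈ s, f p) ^ 2 :=
  calc 2 * ∑ p ∈ s, f p ^ 2 = ∑ p ∈ s, f p * (f p + f (e p)) := by
        rw [mul_sum]
        exact sum_congr rfl fun p hp => by rw [hfe p hp]; ring
    _ ≤ ∑ p ∈ s, f p * ∑ q ∈ s, f q := sum_le_sum fun p hp =>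
        mul_le_mul_of_nonneg_left (add_le_sum hf hp (he p hp) (hne p hp).symm) (hf p hp)
    _ = (∑ p ∈ s, f p) ^ 2 := by rw [← sum_mul, sq]

theorem two_mul_sum_sq_le_sq_sum_of_pairing_erase [DecidableEq ι] {c : ι} (hc : c ∈ s)
    (e : ι → ι) (hf : ∀ p ∈ s, 0 ≤ f p) (he : ∀ p ∈ s.erase c, e p ∈ s.erase c)
    (hne : ∀ p ∈ s.erase c, e p ≠ p) (hfe : ∀ p ∈ s.erase c, f (e p) = f p)
    (hfc : f c ≤ 2 * ∑ p ∈ s.erase c, f p) :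
    2 * ∑ p ∈ s, f p ^ 2 ≤ (∑ p ∈ s, f p) ^ 2 := by
  have hf' : ∀ p ∈ s.erase c, 0 ≤ f p := fun p hp => hf p (mem_of_mem_erase hp)
  have hrest := two_mul_sum_sq_le_sq_sum_of_pairing e hf' he hne hfe
  have hcc : f c * f c ≤ f c * (2 * ∑ p ∈ s.erase c, f p) :=
    mul_le_mul_of_nonneg_left hfc (hf c hc)
  rw [← add_sum_erase s _ hc, ← add_sum_erase s _ hc]
  calc 2 * (f c ^ 2 + ∑ p ∈ s.erase c, f p ^ 2)
      = f c * f c + f c * f c + 2 * ∑ p ∈ s.erase c, f p ^ 2 := by ring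
    _ ≤ f c * f c + f c * (2 * ∑ p ∈ s.erase c, f p) + (∑ p ∈ s.erase c, f p) ^ 2 := by
        gcongr
    _ = (f c + ∑ p ∈ s.erase c, f p) ^ 2 := by ring

end SquareSums

section Sequences

variable {α : Type*}

def insertAt (a : ℕ → α) (i : ℕ) (x : α) (j : ℕ) : α :=
  if j < i then a j else if j = i then x else a (j - 1)

section insertAt

variable {a : ℕ → α} {i j : ℕ} {x : α}

lemma insertAt_of_lt (h : j < i) : insertAt a i x j = a j := if_pos h

lemma insertAt_self : insertAt a i x i = x := by simp [insertAt]

lemma insertAt_succ_of_le (h : i ≤ j) : insertAt a i x (j + 1) = a j := by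
  simp [insertAt, show ¬ j + 1 < i by omega, show j + 1 ≠ i by omega]

end insertAt

variable [LinearOrder α]

def ascentCount (a : ℕ → α) (L : ℕ) : ℕ := #{j ∈ range L | a j < a (j + 1)}

-- Whether the gap in front of position `i` is an ascent, reading `a (-1)` as `-∞`.
def gapAscent (a : ℕ → α) (i : ℕ) : ℕ :=
  if i = 0 then 1 else if a (i - 1) < a i then 1 else 0

lemma ascentCount_eq_sum (a : ℕ → α) (L : ℕ) :
    ascentCount a L = ∑ j ∈ range L, if a j < a (j + 1) then 1 else 0 :=
  card_filter _ _

lemma gapAscent_le_one (a : ℕ → α) (i : ℕ) : gapAscent a i ≤ 1 := by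
  unfold gapAscent; split_ifs <;> simp

lemma sum_gapAscent (a : ℕ → α) (N : ℕ) :
    ∑ i ∈ range (N + 1), gapAscent a i = ascentCount a N + 1 := by
  simp [sum_range_succ', ascentCount_eq_sum, gapAscent]

lemma ascentCount_insertAt_add_gapAscent {a : ℕ → α} {x : α} (hx : ∀ j, a j < x) {i N : ℕ}
    (hi : i ≤ N) :
    ascentCount (insertAt a i x) (N + 1) + gapAscent a i = ascentCount a N + 1 := by
  rw [ascentCount_eq_sum, ascentCount_eq_sum]
  generalize ht : (fun j => if a j < a (j + 1) then 1 else 0) = t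
  generalize hu : (fun j => if insertAt a i x j < insertAt a i x (j + 1) then 1 else 0) = u
  rcases i with _ | k
  · have hu0 : u 0 = 0 := by
      rw [← hu]; dsimp only
      rw [insertAt_self, insertAt_succ_of_le le_rfl, if_neg (hx 0).not_gt]
    have hus : ∀ j, u (j + 1) = t j := fun j => by
      simp [← hu, ← ht, insertAt_succ_of_le (Nat.zero_le _)]
    simp [sum_range_succ', hu0, hus, gapAscent]
  · obtain ⟨r, rfl⟩ := Nat.exists_eq_add_of_le hi
    have hlow : ∀ j ∈ range k, u j = t j := fun j hj => by
      rw [mem_range] at hj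
      simp [← hu, ← ht, insertAt_of_lt (show j < k + 1 by omega),
        insertAt_of_lt (show j + 1 < k + 1 by omega)]
    have huk : u k = 1 := by simp [← hu, insertAt_of_lt, insertAt_self, hx]
    have huk1 : u (k + 1) = 0 := by
      simp [← hu, insertAt_self, insertAt_succ_of_le, (hx _).le]
    have hhigh : ∀ j, u (k + (j + 1 + 1)) = t (k + (j + 1)) := fun j => by
      simp only [← hu, ← ht, ← add_assoc]
      rw [insertAt_succ_of_le (by omega), insertAt_succ_of_le (by omega)]
    have hgap : gapAscent a (k + 1) = t k := by simp [gapAscent, ← ht]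
    rw [show k + 1 + r + 1 = k + (r + 1 + 1) by ring, show k + 1 + r = k + (r + 1) by ring,
      sum_range_add u, sum_range_add t, sum_congr rfl hlow, sum_range_succ' _ (r + 1),
      sum_range_succ' _ r, sum_range_succ' (fun j => t (k + j)) r]
    simp only [hhigh, add_zero, zero_add, huk, huk1, hgap]
    ring

end Sequences

section Ascents

variable {n : ℕ}

-- One-line notation of `σ` with values shifted to `1, …, n` and padded by zeros, so that no
-- ascent is counted at or past position `n - 1`.
def permSeq (σ : Perm (Fin n)) (j : ℕ) : ℕ := if h : j < n then σ ⟨j, h⟩ + 1 else 0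

def ascents (σ : Perm (Fin n)) : ℕ := ascentCount (permSeq σ) n

lemma permSeq_of_lt (σ : Perm (Fin n)) {j : ℕ} (h : j < n) : permSeq σ j = σ ⟨j, h⟩ + 1 :=
  dif_pos h

lemma permSeq_of_le (σ : Perm (Fin n)) {j : ℕ} (h : n ≤ j) : permSeq σ j = 0 :=
  dif_neg (by omega)

lemma permSeq_le (σ : Perm (Fin n)) (j : ℕ) : permSeq σ j ≤ n := by
  unfold permSeq
  split_ifs <;> omega

lemma ascents_eq_card (σ : Perm (Fin n)) :
    ascents σ = #{i : Fin n | ∃ j : Fin n, (j : ℕ) = i + 1 ∧ σ i < σ j} := by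
  rw [ascents, ascentCount_eq_sum, card_filter,
    ← Fin.sum_univ_eq_sum_range (fun j => if permSeq σ j < permSeq σ (j + 1) then 1 else 0)]
  refine sum_congr rfl fun i _ => if_congr ?_ rfl rfl
  rw [permSeq_of_lt σ i.isLt, Fin.eta]
  constructor
  · intro hlt
    have hi : (i : ℕ) + 1 < n := by
      by_contra h
      rw [permSeq_of_le σ (j := i + 1) (by omega)] at hlt
      omega
    rw [permSeq_of_lt σ hi] at hlt
    exact ⟨⟨i + 1, hi⟩, rfl, Fin.lt_def.mpr (by omega)⟩
  · rintro ⟨j, hj, hlt⟩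
    rw [← hj, permSeq_of_lt σ j.isLt]
    exact Nat.succ_lt_succ hlt

theorem eulerian_eq_card_ascents (n k : ℕ) :
    eulerian n k = #{σ : Perm (Fin n) | ascents σ = k} := by
  simp only [ascents_eq_card]
  rfl

lemma permSeq_revPerm_mul (σ : Perm (Fin n)) {j : ℕ} (hj : j < n) :
    permSeq (Fin.revPerm * σ) j = n + 1 - permSeq σ j := by
  simp only [permSeq_of_lt _ hj, Perm.mul_apply, Fin.revPerm_apply, Fin.val_rev]
  have := (σ ⟨j, hj⟩).isLt
  omega

lemma not_permSeq_lt_succ (σ : Perm (Fin n)) {j : ℕ} (hj : n ≤ j + 1) :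
    ¬ permSeq σ j < permSeq σ (j + 1) := by
  rw [permSeq_of_le σ hj]
  omega

lemma ascents_add_ascents_revPerm_mul (σ : Perm (Fin n)) :
    ascents σ + ascents (Fin.revPerm * σ) = n - 1 := by
  have hrev := fun j (hj : j < n) => permSeq_revPerm_mul σ hj
  have hdisj : Disjoint {j ∈ range n | permSeq σ j < permSeq σ (j + 1)}
      {j ∈ range n | permSeq (Fin.revPerm * σ) j < permSeq (Fin.revPerm * σ) (j + 1)} := by
    refine disjoint_filter.mpr fun j _ h1 h2 => ?_
    by_cases hj : j + 1 < n
    · rw [hrev j (by omega), hrev (j + 1) hj] at h2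
      have := permSeq_le σ j
      have := permSeq_le σ (j + 1)
      omega
    · exact not_permSeq_lt_succ σ (by omega) h1
  have hunion : {j ∈ range n | permSeq σ j < permSeq σ (j + 1)} ∪
      {j ∈ range n | permSeq (Fin.revPerm * σ) j < permSeq (Fin.revPerm * σ) (j + 1)} =
      range (n - 1) := by
    ext j
    simp only [mem_union, mem_filter, mem_range]
    constructor
    · rintro (⟨_, h⟩ | ⟨_, h⟩) <;> by_contra hj
      · exact not_permSeq_lt_succ σ (by omega) h
      · exact not_permSeq_lt_succ _ (by omega) h
    · intro hj
      have hne : permSeq σ j ≠ permSeq σ (j + 1) := by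
        rw [permSeq_of_lt σ (by omega), permSeq_of_lt σ (by omega)]
        intro h
        simpa using σ.injective (Fin.ext (Nat.succ_injective h))
      rw [hrev j (by omega), hrev (j + 1) (by omega)]
      have := permSeq_le σ j
      have := permSeq_le σ (j + 1)
      omega
  rw [ascents, ascents, ascentCount, ascentCount, ← card_union_of_disjoint hdisj, hunion,
    card_range]

lemma ascents_le (σ : Perm (Fin n)) : ascents σ ≤ n - 1 := by
  have := ascents_add_ascents_revPerm_mul σ
  omega

theorem eulerian_symm {k : ℕ} (hk : k < n) : eulerian n (n - 1 - k) = eulerian n k := by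
  rw [eulerian_eq_card_ascents, eulerian_eq_card_ascents]
  refine (card_equiv (Equiv.mulLeft Fin.revPerm) fun σ => ?_).symm
  have := ascents_add_ascents_revPerm_mul σ
  simp only [mem_filter, mem_univ, true_and, coe_mulLeft]
  omega

theorem sum_eulerian (hn : 0 < n) : ∑ p ∈ range n, eulerian n p = n ! := by
  simp only [eulerian_eq_card_ascents]
  rw [← card_eq_sum_card_fiberwise fun σ _ => mem_range.mpr ?_, Finset.card_univ,
    Fintype.card_perm, Fintype.card_fin]
  have := ascents_le σ
  omega

theorem eulerian_add_eulerian_succ_le (n k : ℕ) : eulerian n k + eulerian n (k + 1) ≤ n ! := by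
  rw [eulerian_eq_card_ascents, eulerian_eq_card_ascents, ← card_union_of_disjoint
    (disjoint_filter.mpr fun σ _ h h' => by omega)]
  exact (card_le_univ _).trans_eq (by rw [Fintype.card_perm, Fintype.card_fin])

end Ascents

section InsertMax

variable {N : ℕ}

-- One-line notation: that of `τ` with the new largest value `N` inserted at position `i`.
def insertMax (i : Fin (N + 1)) (τ : Perm (Fin N)) : Perm (Fin (N + 1)) :=
  (finSuccEquiv' i).trans ((optionCongr τ).trans (finSuccEquiv' (Fin.last N)).symm)

lemma insertMax_apply_self (i : Fin (N + 1)) (τ : Perm (Fin N)) :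
    insertMax i τ i = Fin.last N := by
  simp [insertMax, finSuccEquiv'_at, finSuccEquiv'_symm_none]

lemma insertMax_apply_succAbove (i : Fin (N + 1)) (τ : Perm (Fin N)) (k : Fin N) :
    insertMax i τ (i.succAbove k) = (τ k).castSucc := by
  simp [insertMax, finSuccEquiv'_succAbove, finSuccEquiv'_symm_some, Fin.succAbove_last]

lemma insertMax_bijective :
    Function.Bijective fun p : Fin (N + 1) × Perm (Fin N) => insertMax p.1 p.2 := by
  refine (Fintype.bijective_iff_injective_and_card _).mpr ⟨?_, ?_⟩
  · rintro ⟨i, τ⟩ ⟨i', τ'⟩ h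
    simp only at h
    have hi : insertMax i' τ' i = Fin.last N := by rw [← h, insertMax_apply_self]
    obtain rfl : i = i' := (insertMax i' τ').injective (by rw [hi, insertMax_apply_self])
    refine Prod.ext rfl (Equiv.ext fun k => Fin.castSucc_injective N ?_)
    rw [← insertMax_apply_succAbove, ← insertMax_apply_succAbove, h]
  · simp [Fintype.card_perm, Nat.factorial_succ]

lemma permSeq_insertMax (i : Fin (N + 1)) (τ : Perm (Fin N)) :
    permSeq (insertMax i τ) = insertAt (permSeq τ) i (N + 1) := by
  funext j
  rcases lt_trichotomy j i with hj | rfl | hj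
  · have hjN : j < N := by omega
    have hpos : (⟨j, by omega⟩ : Fin (N + 1)) = i.succAbove ⟨j, hjN⟩ :=
      (Fin.succAbove_of_castSucc_lt i ⟨j, hjN⟩ (Fin.lt_def.mpr hj)).symm
    rw [insertAt_of_lt hj, permSeq_of_lt _ (by omega), permSeq_of_lt _ hjN, hpos,
      insertMax_apply_succAbove, Fin.val_castSucc]
  · rw [insertAt_self, permSeq_of_lt _ i.isLt, Fin.eta, insertMax_apply_self, Fin.val_last]
  · obtain ⟨j, rfl⟩ := Nat.exists_eq_add_of_lt hj
    rw [insertAt_succ_of_le (by omega)]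
    by_cases hjN : i + j < N
    · have hpos : (⟨i + j + 1, by omega⟩ : Fin (N + 1)) = i.succAbove ⟨i + j, hjN⟩ :=
        (Fin.succAbove_of_le_castSucc i ⟨i + j, hjN⟩ (Fin.le_def.mpr (by simp))).symm
      rw [permSeq_of_lt _ (by omega), permSeq_of_lt _ hjN, hpos, insertMax_apply_succAbove,
        Fin.val_castSucc]
    · rw [permSeq_of_le _ (by omega), permSeq_of_le _ (by omega)]

lemma ascents_insertMax_add_gapAscent (i : Fin (N + 1)) (τ : Perm (Fin N)) :
    ascents (insertMax i τ) + gapAscent (permSeq τ) i = ascents τ + 1 := by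
  rw [ascents, ascents, permSeq_insertMax]
  exact ascentCount_insertAt_add_gapAscent (fun j => Nat.lt_succ_of_le (permSeq_le τ j))
    (Nat.lt_succ_iff.mp i.isLt)

lemma card_ascents_insertMax_eq (τ : Perm (Fin N)) (k : ℕ) :
    #{i : Fin (N + 1) | ascents (insertMax i τ) = k + 1} =
      (if ascents τ = k + 1 then k + 2 else 0) + (if ascents τ = k then N - k else 0) := by
  have hins := fun i => ascents_insertMax_add_gapAscent i τ
  set w := gapAscent (permSeq τ)
  have hw : ∀ j, w j ≤ 1 := gapAscent_le_one _
  have hsum : ∑ j ∈ range (N + 1), w j = ascents τ + 1 := sum_gapAscent _ _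
  have hcard : #{i : Fin (N + 1) | ascents (insertMax i τ) = k + 1} =
      ∑ j ∈ range (N + 1), if ascents τ = k + w j then 1 else 0 := by
    rw [card_filter, ← Fin.sum_univ_eq_sum_range]
    exact sum_congr rfl fun i _ => if_congr (by have := hins i; omega) rfl rfl
  rw [hcard]
  split_ifs with h h' h'
  · omega
  · calc ∑ j ∈ range (N + 1), (if ascents τ = k + w j then 1 else 0)
        = ∑ j ∈ range (N + 1), w j :=
          sum_congr rfl fun j _ => by have := hw j; split_ifs <;> omega
      _ = k + 2 + 0 := by omega
  · have hsplit : ∑ j ∈ range (N + 1), ((if ascents τ = k + w j then 1 else 0) + w j) = N + 1 :=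
      (sum_congr rfl fun j _ => show _ = 1 by have := hw j; split_ifs <;> omega).trans (by simp)
    rw [sum_add_distrib, hsum] at hsplit
    omega
  · exact sum_eq_zero fun j _ => if_neg (by have := hw j; omega)

theorem eulerian_succ_succ (N k : ℕ) :
    eulerian (N + 1) (k + 1) = (k + 2) * eulerian N (k + 1) + (N - k) * eulerian N k := by
  rw [eulerian_eq_card_ascents, ← card_equiv (Equiv.ofBijective _ insertMax_bijective)
    (t := {σ | ascents σ = k + 1}) (s := {p | ascents (insertMax p.1 p.2) = k + 1}) (by simp),
    card_filter, Fintype.sum_prod_type_right]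
  simp only [← card_filter, card_ascents_insertMax_eq]
  rw [sum_add_distrib, ← sum_filter, ← sum_filter, sum_const, sum_const, smul_eq_mul, smul_eq_mul,
    eulerian_eq_card_ascents, eulerian_eq_card_ascents, mul_comm, mul_comm (N - k)]

end InsertMax

theorem three_mul_eulerian_central_le {m : ℕ} (hm : 0 < m) :
    3 * eulerian (2 * m + 1) m ≤ 2 * (2 * m + 1)! := by
  obtain ⟨k, rfl⟩ : ∃ k, m = k + 1 := ⟨m - 1, by omega⟩
  show 3 * eulerian (2 * k + 2 + 1) (k + 1) ≤ 2 * (2 * k + 2 + 1)!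
  rw [eulerian_succ_succ, show 2 * k + 2 - k = k + 2 by omega, Nat.factorial_succ]
  calc 3 * ((k + 2) * eulerian (2 * k + 2) (k + 1) + (k + 2) * eulerian (2 * k + 2) k)
      = 3 * (k + 2) * (eulerian (2 * k + 2) k + eulerian (2 * k + 2) (k + 1)) := by ring
    _ ≤ 3 * (k + 2) * (2 * k + 2)! := Nat.mul_le_mul_left _ (eulerian_add_eulerian_succ_le _ _)
    _ ≤ 2 * ((2 * k + 2 + 1) * (2 * k + 2)!) := by nlinarith

/-- For all `n ≥ 2`, the central autocorrelation coefficient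
`a₀ = (∑ₚ A(n,p)²)/(∑ₚ A(n,p))²` satisfies `a₀ ≤ 1/2`; equivalently,
`2 ∑ₚ A(n,p)² ≤ (∑ₚ A(n,p))²`.  (The sums run over all integers `p`, but the
Eulerian numbers `A(n,p)` vanish outside `0 ≤ p < n`.) -/
theorem eulerian_central_term_le (n : ℕ) (hn : 2 ≤ n) :
    2 * ∑ p ∈ Finset.range n, (eulerian n p) ^ 2 ≤
      (∑ p ∈ Finset.range n, eulerian n p) ^ 2 := by
  obtain ⟨k, rfl | rfl⟩ := Nat.even_or_odd' n
  · refine two_mul_sum_sq_le_sq_sum_of_pairing (fun p => 2 * k - 1 - p) (fun _ _ => Nat.zero_le _)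
      (fun p hp => ?_) (fun p hp => ?_) (fun p hp => eulerian_symm (mem_range.mp hp)) <;>
      simp only [mem_range] at hp ⊢ <;> omega
  · have hmem : k ∈ range (2 * k + 1) := mem_range.mpr (by omega)
    refine two_mul_sum_sq_le_sq_sum_of_pairing_erase hmem (fun p => 2 * k + 1 - 1 - p)
      (fun _ _ => Nat.zero_le _) (fun p hp => ?_) (fun p hp => ?_)
      (fun p hp => eulerian_symm (mem_range.mp (mem_of_mem_erase hp))) ?_
    · simp only [mem_erase, mem_range] at hp ⊢; omega
    · simp only [mem_erase, mem_range] at hp; omega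
    · have hsplit := sum_erase_add _ (eulerian (2 * k + 1)) hmem
      rw [sum_eulerian (by omega)] at hsplit
      have := three_mul_eulerian_central_le (show 0 < k by omega)
      omega
end

section
/- Let U be a unipotent algebraic group over a field of characteristic zero, ψ an automorphism of U with ψ^r = id. If u ∈ U satisfies u * ψ(u) * ψ^2(u) * ... * ψ^{r-1}(u) = 1, then there exists v ∈ U with u = v^{-1} * ψ(v). -/
/-!
Induct on the nilpotency class, passing from `U` to `U ⧸ Z(U)`. Vanishing of `H¹` survives an
extension by a characteristic subgroup `N`: if `u` becomes a coboundary `v⁻¹ ψ(v)` modulo `N`,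
then `z = v u ψ(v)⁻¹` lies in `N`, and its norm is trivial because twisting by `v` only
conjugates the norm. On the abelian centre one solves `z = c⁻¹ ψ(c)` explicitly, taking for `c`
the `r`-th root of `∏ (ψ^j z)^j`. Unique extraction of roots passes to `Z(U)` and to `U ⧸ Z(U)`.
-/

open Subgroup

def twistedNorm {G : Type*} [Group G] (ψ : MulAut G) (r : ℕ) (g : G) : G :=
  ((List.range r).map fun j => (ψ ^ j) g).prod

def UniquelyDivisible (G : Type*) [Group G] : Prop :=
  ∀ k : ℕ, 0 < k → Function.Bijective fun g : G => g ^ k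

/-- Nonabelian `H¹` of `ℤ/r` acting through `ψ`: the cocycles are the `g` of trivial twisted norm,
and the coboundaries are the `v⁻¹ ψ(v)`. -/
def CyclicH1Vanishes (G : Type*) [Group G] : Prop :=
  ∀ (ψ : MulAut G) (r : ℕ), 0 < r → ψ ^ r = 1 →
    ∀ g : G, twistedNorm ψ r g = 1 → ∃ v : G, g = v⁻¹ * ψ v

section twistedNorm

variable {G H : Type*} [Group G] [Group H]

lemma MulAut.pow_succ_apply (ψ : MulAut G) (j : ℕ) (g : G) :
    (ψ ^ (j + 1)) g = ψ ((ψ ^ j) g) := by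
  rw [pow_succ', MulAut.mul_apply]

lemma map_twistedNorm (f : G →* H) {ψ : MulAut G} {ψ' : MulAut H}
    (hf : ∀ g, f (ψ g) = ψ' (f g)) (r : ℕ) (g : G) :
    f (twistedNorm ψ r g) = twistedNorm ψ' r (f g) := by
  have hpow : ∀ j g, f ((ψ ^ j) g) = (ψ' ^ j) (f g) := by
    intro j
    induction j with
    | zero => simp
    | succ j ih => intro g; rw [MulAut.pow_succ_apply, hf, ih, MulAut.pow_succ_apply]
  simp only [twistedNorm, map_list_prod, List.map_map, Function.comp_def, hpow]

lemma twistedNorm_twist (ψ : MulAut G) (r : ℕ) (v g : G) :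
    twistedNorm ψ r (v * g * (ψ v)⁻¹) = v * twistedNorm ψ r g * ((ψ ^ r) v)⁻¹ := by
  induction r with
  | zero => simp [twistedNorm]
  | succ r ih =>
    simp only [twistedNorm] at ih ⊢
    rw [List.prod_range_succ, List.prod_range_succ, ih, map_mul, map_mul, map_inv,
      pow_succ ψ r, MulAut.mul_apply]
    group

end twistedNorm

section commGroup

variable {A : Type*} [CommGroup A]

lemma exists_eq_inv_mul_of_twistedNorm_eq_one {χ : MulAut A} {r : ℕ}
    (hroot : Function.Bijective fun a : A => a ^ r) (hχ : χ ^ r = 1) {z : A}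
    (hz : twistedNorm χ r z = 1) : ∃ c : A, z = c⁻¹ * χ c := by
  -- The witness is an `r`-th root of `t = ∏ (χ^j z)^j`, which satisfies `χ t = t z^r`.
  set f : ℕ → A := fun j => (χ ^ j) z ^ j
  set t := ((List.range r).map f).prod
  have hshift : χ t = t * z ^ r := calc
    χ t = χ t * χ (twistedNorm χ r z) := by rw [hz, map_one, mul_one]
    _ = ((List.range r).map fun j => f (j + 1)).prod := by
      simp only [t, twistedNorm, map_list_prod, List.map_map, ← List.prod_map_mul]
      congr 1
      refine List.map_congr_left fun j _ => ?_
      simp only [Function.comp_apply, f, ← pow_succ, map_pow, MulAut.pow_succ_apply]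
    _ = t * z ^ r := by
      have := List.prod_range_succ' f r
      rw [List.prod_range_succ] at this
      simpa [f, hχ] using this.symm
  obtain ⟨c, hc⟩ := hroot.2 t
  refine ⟨c, hroot.1 ?_⟩
  simp only [mul_pow, inv_pow, ← map_pow, hc, hshift]
  group

lemma cyclicH1Vanishes_of_commGroup (hA : UniquelyDivisible A) : CyclicH1Vanishes A :=
  fun _ r hr hχ _ hz => exists_eq_inv_mul_of_twistedNorm_eq_one (hA r hr) hχ hz

end commGroup

section center

variable {G : Type*} [Group G]

lemma mem_center_of_pow_mem_center {k : ℕ} (hk : Function.Injective fun g : G => g ^ k)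
    {x : G} (hx : x ^ k ∈ center G) : x ∈ center G := by
  refine mem_center_iff.mpr fun g => mul_inv_eq_iff_eq_mul.mp <| hk ?_
  simp only [conj_pow, mem_center_iff.mp hx g, mul_inv_cancel_right]

lemma UniquelyDivisible.center (hG : UniquelyDivisible G) :
    UniquelyDivisible (Subgroup.center G) := by
  intro k hk
  refine ⟨fun a b hab => Subtype.ext <| (hG k hk).1 (congrArg Subtype.val hab), fun a => ?_⟩
  obtain ⟨x, hx⟩ := (hG k hk).2 a
  have hx : x ^ k = a := hx
  exact ⟨⟨x, mem_center_of_pow_mem_center (hG k hk).1 (hx ▸ a.2)⟩, Subtype.ext hx⟩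

lemma UniquelyDivisible.quotient_center (hG : UniquelyDivisible G) :
    UniquelyDivisible (G ⧸ Subgroup.center G) := by
  intro k hk
  refine ⟨fun a b hab => ?_, fun a => ?_⟩
  · obtain ⟨x, rfl⟩ := QuotientGroup.mk_surjective a
    obtain ⟨y, rfl⟩ := QuotientGroup.mk_surjective b
    have hxy : (x ^ k)⁻¹ * y ^ k ∈ Subgroup.center G := QuotientGroup.eq.mp hab
    obtain ⟨w, hw⟩ := (hG k hk).2 ((x ^ k)⁻¹ * y ^ k)
    have hw : w ^ k = (x ^ k)⁻¹ * y ^ k := hw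
    have hwc : w ∈ Subgroup.center G := mem_center_of_pow_mem_center (hG k hk).1 (hw ▸ hxy)
    have hy : y = x * w := (hG k hk).1 <| by
      show y ^ k = (x * w) ^ k
      rw [Commute.mul_pow (mem_center_iff.mp hwc x), hw, mul_inv_cancel_left]
    exact QuotientGroup.eq.mpr (by rwa [hy, inv_mul_cancel_left])
  · obtain ⟨x, rfl⟩ := QuotientGroup.mk_surjective a
    obtain ⟨y, hy⟩ := (hG k hk).2 x
    exact ⟨y, by simp only [← QuotientGroup.mk_pow, hy]⟩

end center

section extension

variable {G : Type*} [Group G]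

def MulAut.characteristicQuotient (N : Subgroup G) [N.Characteristic] :
    MulAut G →* MulAut (G ⧸ N) where
  toFun φ := QuotientGroup.congr N N φ (characteristic_iff_map_eq.mp inferInstance φ)
  map_one' := by
    ext x
    induction x using QuotientGroup.induction_on
    rfl
  map_mul' _ _ := by
    ext x
    induction x using QuotientGroup.induction_on
    rfl

@[simp]
lemma MulAut.characteristicQuotient_apply_mk (N : Subgroup G) [N.Characteristic]
    (φ : MulAut G) (g : G) :
    MulAut.characteristicQuotient N φ (g : G ⧸ N) = ((φ g : G) : G ⧸ N) :=
  rfl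

lemma CyclicH1Vanishes.of_quotient (N : Subgroup G) [N.Characteristic]
    (hN : CyclicH1Vanishes N) (hQ : CyclicH1Vanishes (G ⧸ N)) : CyclicH1Vanishes G := by
  intro ψ r hr hψ g hg
  obtain ⟨w, hw⟩ := hQ (MulAut.characteristicQuotient N ψ) r hr
    (by rw [← map_pow, hψ, map_one])
    g ((map_twistedNorm (QuotientGroup.mk' N) (fun _ => rfl) r g).symm.trans (by simp [hg]))
  obtain ⟨v, rfl⟩ := QuotientGroup.mk_surjective w
  set z := v * g * (ψ v)⁻¹ with hz
  have hzN : z ∈ N := by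
    rw [← QuotientGroup.eq_one_iff, hz, QuotientGroup.mk_mul, QuotientGroup.mk_mul,
      QuotientGroup.mk_inv, hw, ← MulAut.characteristicQuotient_apply_mk]
    group
  obtain ⟨c, hcN⟩ := hN (MulAut.characteristic N ψ) r hr (by rw [← map_pow, hψ, map_one])
    ⟨z, hzN⟩ <| Subtype.ext <| by
      rw [← N.coe_subtype, map_twistedNorm N.subtype (fun _ => rfl), N.coe_subtype,
        twistedNorm_twist, hg, hψ]
      simp
  refine ⟨c * v, ?_⟩
  have hc : z = (c : G)⁻¹ * ψ c := congrArg Subtype.val hcN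
  rw [mul_inv_rev, map_mul, ← mul_assoc, mul_assoc _ _ (ψ c), ← hc, hz]
  group

end extension

open scoped IsMulCommutative in
lemma cyclicH1Vanishes_center {G : Type*} [Group G] (hG : UniquelyDivisible G) :
    CyclicH1Vanishes (Subgroup.center G) :=
  cyclicH1Vanishes_of_commGroup hG.center

/-- A unipotent group over a field of characteristic zero is represented by its group of points:
a nilpotent group with unique `k`-th roots for all `k > 0`. -/
theorem unipotent_h1_vanishing (U : Type*) [Group U] [Group.IsNilpotent U]
    (hdiv : ∀ k : ℕ, 0 < k → Function.Bijective fun u : U => u ^ k)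
    (ψ : MulAut U) (r : ℕ) (hr : 0 < r) (hψ : ψ ^ r = 1)
    (u : U) (hu : ((List.range r).map fun j => (ψ ^ j) u).prod = 1) :
    ∃ v : U, u = v⁻¹ * ψ v := by
  have key := Group.nilpotent_center_quotient_ind
    (P := fun G _ _ => UniquelyDivisible G → CyclicH1Vanishes G) U
    (fun _ _ _ _ _ _ _ _ _ _ => ⟨1, Subsingleton.elim _ _⟩)
    (fun G _ _ ih hG => CyclicH1Vanishes.of_quotient (Subgroup.center G)
      (cyclicH1Vanishes_center hG) (ih hG.quotient_center))
  exact key hdiv ψ r hr hψ u hu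
end
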